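/- Let ω, λ be real numbers with ζ(1/2 + i·λ) = 0, set ρ = ω/2 - λ, and for y > 0 set g(y) = y^{-iω/2} · Σ_{n=1}^∞ (-1)^{n+1} (n·y)^{-iω/2} (n·y)^{-1/2 + iρ}. Then for every real x > 0, the series x^{iω/2} · Σ_{m=1}^∞ (-1)^{m+1} m^{-1} (x/m)^{iω/2} · g(x/m) converges (as the limit of its partial sums) to 0; that is, the ground state ψ₀(x) = x^{-1/2 + i(ω/2 - λ)} satisfies H₋ ψ₀ = 0, so the ground state energy vanishes. -/

import Mathlib

/-!
Grouping consecutive terms, `∑ (-1)ⁿ (n+1)^{-s}` becomes `∑ ((2k+1)^{-s} - (2k+2)^{-s})`, whose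
terms are `O(|s| k^{-re s - 1})` by the mean value theorem; so it converges locally uniformly on
`re s > 0` to a holomorphic function `η`. Splitting `ζ` into odd and even terms gives
`η(s) = (1 - 2^{1-s}) ζ(s)` for `re s > 1`, and hence, by the identity theorem, on the punctured
half-plane. At the zero `s = 1/2 + iλ` of `ζ` the even partial sums of the alternating series
therefore tend to `0`. Since `(n y)^{-iω/2} (n y)^{-1/2+iρ} = y^{-s} n^{-s}`, the partial sums
defining `g(y)` are `y^{-iω/2-s}` times those of the alternating series, so `g` vanishes on
`(0, ∞)` and every partial sum of the outer series is `0`.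
-/

open Filter Finset Complex Set

lemma isPreconnected_re_pos_diff_singleton {c : ℂ} (hc : 0 < c.re) :
    IsPreconnected ({w : ℂ | 0 < w.re} \ {c}) := by
  -- `φ` maps `ℂ` onto the half-plane, and only `0` to `c`
  let φ : ℂ → ℂ := fun z => ↑(c.re * Real.exp z.re) + ↑(z.im + c.im) * I
  have hφ : ∀ z, (φ z).re = c.re * Real.exp z.re ∧ (φ z).im = z.im + c.im := fun z => by
    simp [φ, -ofReal_exp, -Complex.ofReal_mul]
  have hφ_eq_iff : ∀ z w, φ z = w ↔ c.re * Real.exp z.re = w.re ∧ z.im + c.im = w.im := by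
    intro z w
    rw [Complex.ext_iff, (hφ z).1, (hφ z).2]
  have himage : φ '' {0}ᶜ = {w : ℂ | 0 < w.re} \ {c} := by
    ext w
    simp only [Set.mem_image, Set.mem_compl_iff, Set.mem_singleton_iff, Set.mem_sdiff,
      Set.mem_ofPred_eq]
    constructor
    · rintro ⟨z, hz, rfl⟩
      refine ⟨by rw [(hφ z).1]; positivity, fun hzc => hz ?_⟩
      rw [hφ_eq_iff] at hzc
      apply Complex.ext
      · simpa [hc.ne'] using hzc.1
      · simpa using hzc.2
    · rintro ⟨hw, hwc⟩
      have hz : φ (↑(Real.log (w.re / c.re)) + ↑(w.im - c.im) * I) = w := by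
        rw [hφ_eq_iff]
        simp [Real.exp_log (div_pos hw hc), mul_div_cancel₀ _ hc.ne']
      have h0 : φ 0 = c := by simp [hφ_eq_iff]
      exact ⟨_, fun h => hwc (by rw [← hz, h, h0]), hz⟩
  rw [← himage]
  exact (isConnected_compl_singleton_of_one_lt_rank (by simp) 0).isPreconnected.image φ
    (by fun_prop)

lemma norm_ofReal_cpow_neg_sub_le {s : ℂ} (hs : -1 ≤ s.re) {a : ℝ} (ha : 0 < a) :
    ‖(a : ℂ) ^ (-s) - ((a + 1 : ℝ) : ℂ) ^ (-s)‖ ≤ ‖s‖ * a ^ (-s.re - 1) := by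
  have hderiv : ∀ t ∈ Icc a (a + 1), HasDerivWithinAt (fun t : ℝ => (t : ℂ) ^ (-s))
      (-s * (t : ℂ) ^ (-s - 1)) (Icc a (a + 1)) t := fun t ht =>
    ((hasStrictDerivAt_cpow_const (ofReal_mem_slitPlane.2 (ha.trans_le ht.1))).hasDerivAt
      |>.comp_ofReal).hasDerivWithinAt
  have hbound : ∀ t ∈ Ico a (a + 1), ‖-s * (t : ℂ) ^ (-s - 1)‖ ≤ ‖s‖ * a ^ (-s.re - 1) := by
    intro t ht
    rw [norm_mul, norm_neg, norm_cpow_eq_rpow_re_of_pos (ha.trans_le ht.1),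
      show (-s - 1).re = -s.re - 1 by simp]
    exact mul_le_mul_of_nonneg_left (Real.rpow_le_rpow_of_nonpos ha ht.1 (by linarith))
      (norm_nonneg s)
  have := norm_image_sub_le_of_norm_deriv_le_segment' hderiv hbound (a + 1) (by simp)
  rw [norm_sub_rev]
  simpa using this

/-- The terms of `∑ (-1)ⁿ (n+1)^{-s}` grouped in pairs, so that the series converges absolutely
for `0 < re s`. -/
noncomputable def etaPair (s : ℂ) (k : ℕ) : ℂ :=
  (2 * k + 1 : ℂ) ^ (-s) - (2 * k + 2 : ℂ) ^ (-s)

lemma norm_etaPair_le {s : ℂ} (hs : -1 ≤ s.re) (k : ℕ) :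
    ‖etaPair s k‖ ≤ ‖s‖ * ((k : ℝ) + 1) ^ (-s.re - 1) := by
  have h := norm_ofReal_cpow_neg_sub_le hs (a := 2 * k + 1) (by positivity)
  push_cast at h
  rw [etaPair, show (2 * k + 2 : ℂ) = 2 * k + 1 + 1 by ring]
  refine h.trans (mul_le_mul_of_nonneg_left ?_ (norm_nonneg s))
  exact Real.rpow_le_rpow_of_nonpos (by positivity) (by linarith) (by linarith)

lemma summable_natCast_add_one_rpow {p : ℝ} (hp : p < -1) :
    Summable fun k : ℕ => ((k : ℝ) + 1) ^ p := by
  simpa using (summable_nat_add_iff 1).2 (Real.summable_nat_rpow.2 hp)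

lemma summable_etaPair {s : ℂ} (hs : 0 < s.re) : Summable (etaPair s) :=
  .of_norm_bounded ((summable_natCast_add_one_rpow (by linarith)).mul_left ‖s‖)
    (norm_etaPair_le (by linarith))

/-- The Dirichlet eta function; the `tsum` is meaningful only for `0 < re s`. -/
noncomputable def dirichletEta (s : ℂ) : ℂ := ∑' k, etaPair s k

lemma differentiableOn_dirichletEta : DifferentiableOn ℂ dirichletEta {s | 0 < s.re} := by
  intro s (hs : 0 < s.re)
  set U : Set ℂ := {w | s.re / 2 < w.re ∧ ‖w‖ < ‖s‖ + 1}
  have hU : IsOpen U := (isOpen_lt continuous_const continuous_re).inter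
    (isOpen_lt continuous_norm continuous_const)
  have hsU : s ∈ U := ⟨by linarith, by linarith⟩
  have hbound : ∀ k, ∀ w ∈ U, ‖etaPair w k‖ ≤ (‖s‖ + 1) * ((k : ℝ) + 1) ^ (-(s.re / 2) - 1) := by
    intro k w ⟨hre, hnorm⟩
    refine (norm_etaPair_le (by linarith) k).trans ?_
    gcongr
    linarith
  have hdiff : ∀ k, DifferentiableOn ℂ (fun w => etaPair w k) U := fun k =>
    (Differentiable.sub (differentiable_id.neg.const_cpow (Or.inl (by norm_cast)))
      (differentiable_id.neg.const_cpow (Or.inl (by norm_cast)))).differentiableOn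
  exact ((differentiableOn_tsum_of_summable_norm
    ((summable_natCast_add_one_rpow (by linarith)).mul_left _)
    hdiff hU hbound).differentiableAt (hU.mem_nhds hsU)).differentiableWithinAt

lemma dirichletEta_eq_mul_riemannZeta_of_one_lt_re {s : ℂ} (hs : 1 < s.re) :
    dirichletEta s = (1 - 2 ^ (1 - s)) * riemannZeta s := by
  set f : ℕ → ℂ := fun n => ((n : ℂ) + 1) ^ (-s)
  have hf : HasSum f (riemannZeta s) := by
    have hsum := (summable_nat_add_iff 1).2 (summable_one_div_nat_cpow.2 hs)
    simp only [zeta_eq_tsum_one_div_nat_add_one_cpow hs, Nat.cast_add_one] at hsum ⊢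
    simpa [f, cpow_neg] using hsum.hasSum
  have heven : Summable fun k => f (2 * k) :=
    hf.summable.comp_injective (mul_right_injective₀ two_ne_zero)
  have hodd : Summable fun k => f (2 * k + 1) :=
    hf.summable.comp_injective ((add_left_injective 1).comp (mul_right_injective₀ two_ne_zero))
  have hodd_sum : ∑' k, f (2 * k + 1) = 2 ^ (-s) * riemannZeta s := by
    rw [← hf.tsum_eq, ← tsum_mul_left]
    refine tsum_congr fun k => ?_
    simp only [f]
    push_cast
    rw [show 2 * (k : ℂ) + 1 + 1 = (2 : ℝ) * ((k + 1 : ℝ) : ℂ) by push_cast; ring,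
      mul_cpow_ofReal_nonneg (by norm_num) (by positivity)]
    push_cast
    rfl
  have hsplit : ∑' k, f (2 * k) + ∑' k, f (2 * k + 1) = riemannZeta s := by
    rw [tsum_even_add_odd heven hodd, hf.tsum_eq]
  have heta : dirichletEta s = ∑' k, f (2 * k) - ∑' k, f (2 * k + 1) := by
    rw [dirichletEta, ← heven.tsum_sub hodd]
    refine tsum_congr fun k => ?_
    simp only [etaPair, f]
    push_cast
    ring_nf
  rw [heta, sub_eq_add_neg 1 s, cpow_add _ _ two_ne_zero, cpow_one]
  linear_combination hsplit - 2 * hodd_sum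

lemma dirichletEta_eq_mul_riemannZeta {s : ℂ} (hs : 0 < s.re) (hs1 : s ≠ 1) :
    dirichletEta s = (1 - 2 ^ (1 - s)) * riemannZeta s := by
  set U : Set ℂ := {w : ℂ | 0 < w.re} \ {1}
  have hU : IsOpen U := (isOpen_lt continuous_const continuous_re).sdiff isClosed_singleton
  have hη : AnalyticOnNhd ℂ dirichletEta U :=
    (differentiableOn_dirichletEta.analyticOnNhd (isOpen_lt continuous_const continuous_re)).mono
      sdiff_subset
  have hζ : AnalyticOnNhd ℂ (fun w => (1 - 2 ^ (1 - w)) * riemannZeta w) U :=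
    DifferentiableOn.analyticOnNhd (fun w hw => DifferentiableAt.differentiableWithinAt <|
      ((differentiableAt_id.const_sub 1).const_cpow (Or.inl two_ne_zero)).const_sub 1 |>.mul
        (differentiableAt_riemannZeta hw.2)) hU
  have heq : dirichletEta =ᶠ[nhds 2] fun w => (1 - 2 ^ (1 - w)) * riemannZeta w :=
    Filter.eventually_of_mem ((isOpen_lt continuous_const continuous_re).mem_nhds
      (show (1 : ℝ) < (2 : ℂ).re by norm_num))
      fun w hw => dirichletEta_eq_mul_riemannZeta_of_one_lt_re hw
  exact hη.eqOn_of_preconnected_of_eventuallyEq hζ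
    (isPreconnected_re_pos_diff_singleton one_pos) ⟨by norm_num, by norm_num⟩ heq ⟨hs, hs1⟩

lemma sum_range_two_mul_neg_one_pow_mul_cpow (s : ℂ) (N : ℕ) :
    ∑ n ∈ range (2 * N), (-1) ^ n * ((n : ℂ) + 1) ^ (-s) = ∑ k ∈ range N, etaPair s k := by
  induction N with
  | zero => simp
  | succ N ih =>
    rw [Nat.mul_succ, sum_range_succ, sum_range_succ, ih, sum_range_succ, etaPair]
    have h1 : (-1 : ℂ) ^ (2 * N) = 1 := by simp [pow_mul]
    rw [pow_succ, h1]
    push_cast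
    ring_nf

lemma tendsto_sum_range_two_mul_neg_one_pow_mul_cpow {s : ℂ} (hs : 0 < s.re) (hs1 : s ≠ 1) :
    Tendsto (fun N => ∑ n ∈ range (2 * N), (-1) ^ n * ((n : ℂ) + 1) ^ (-s)) atTop
      (nhds ((1 - 2 ^ (1 - s)) * riemannZeta s)) := by
  simp only [sum_range_two_mul_neg_one_pow_mul_cpow, ← dirichletEta_eq_mul_riemannZeta hs hs1]
  exact (summable_etaPair hs).hasSum.tendsto_sum_nat

lemma ofReal_mul_cpow_mul_cpow {r y : ℝ} (hr : 0 < r) (hy : 0 < y) (a b : ℂ) :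
    ((r * y : ℝ) : ℂ) ^ a * ((r * y : ℝ) : ℂ) ^ b = (y : ℂ) ^ (a + b) * (r : ℂ) ^ (a + b) := by
  rw [← cpow_add _ _ (ofReal_ne_zero.2 (by positivity)), ofReal_mul,
    mul_cpow_ofReal_nonneg hr.le hy.le, mul_comm]

/-- If `ζ(1/2 + iλ) = 0`, `ρ = ω/2 - λ`, and `g = A(ω) ψ₀` (defined for `y > 0` as the limit
of the partial sums below), then for every `x > 0` the series defining `(A†(ω) g)(x)`
converges (as the limit of its partial sums) to `0`: the ground state
`ψ₀(x) = x^{-1/2+i(ω/2-λ)}` satisfies `H₋ ψ₀ = 0`, so the ground state energy vanishes. -/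
theorem ground_state_energy_vanishes (ω lam : ℝ)
    (hzero : riemannZeta ((1 / 2 : ℂ) + Complex.I * (lam : ℂ)) = 0)
    (ρ : ℝ) (hρ : ρ = ω / 2 - lam) (g : ℝ → ℂ)
    (hg : ∀ y : ℝ, 0 < y →
      Filter.Tendsto
        (fun N : ℕ => (y : ℂ) ^ (-(Complex.I * (ω : ℂ)) / 2) *
          ∑ n ∈ Finset.range N, (-1 : ℂ) ^ n *
            ((((n + 1 : ℕ) : ℝ) * y : ℝ) : ℂ) ^ (-(Complex.I * (ω : ℂ)) / 2) *
            ((((n + 1 : ℕ) : ℝ) * y : ℝ) : ℂ) ^ (-(1 / 2 : ℂ) + Complex.I * (ρ : ℂ)))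
        Filter.atTop (nhds (g y)))
    (x : ℝ) (hx : 0 < x) :
    Filter.Tendsto
      (fun N : ℕ => (x : ℂ) ^ (Complex.I * (ω : ℂ) / 2) *
        ∑ m ∈ Finset.range N, (-1 : ℂ) ^ m * ((m + 1 : ℕ) : ℂ)⁻¹ *
          (((x / ((m + 1 : ℕ) : ℝ)) : ℝ) : ℂ) ^ (Complex.I * (ω : ℂ) / 2) *
          g (x / ((m + 1 : ℕ) : ℝ)))
      Filter.atTop (nhds 0) := by
  set s : ℂ := 1 / 2 + I * lam
  have hs : 0 < s.re := by simp [s]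
  have hs1 : s ≠ 1 := fun h => by norm_num [s, Complex.ext_iff] at h
  have hexp : -(I * ω) / 2 + (-(1 / 2) + I * ρ) = -s := by rw [hρ]; push_cast; ring
  -- `g` vanishes: along even `N` its defining partial sums tend to `(1 - 2^{1-s}) ζ(s) = 0`
  have hg0 : ∀ y, 0 < y → g y = 0 := by
    intro y hy
    have hlim := (tendsto_sum_range_two_mul_neg_one_pow_mul_cpow hs hs1).const_mul
      ((y : ℂ) ^ (-(I * ω) / 2) * (y : ℂ) ^ (-s))
    rw [hzero, mul_zero, mul_zero] at hlim
    refine tendsto_nhds_unique ((hg y hy).comp (tendsto_id.const_mul_atTop' two_pos)) ?_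
    refine hlim.congr fun N => ?_
    simp only [Function.comp_apply, id_eq, mul_assoc, hexp, mul_sum,
      ofReal_mul_cpow_mul_cpow (Nat.cast_pos.2 (Nat.succ_pos _)) hy]
    push_cast
    ring_nf
  have hterm : ∀ m : ℕ, g (x / ((m + 1 : ℕ) : ℝ)) = 0 := fun m => hg0 _ (by positivity)
  simp only [hterm, mul_zero, sum_const_zero]
  exact tendsto_const_nhds
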